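/- Let f : ℕ → ℂ with f(1) ≠ 0 and let g be the binomial inverse of f, i.e., g(n) = ξ(n)·h(n) where h is the Dirichlet inverse of n ↦ f(n)/ξ(n). Let α, β : [1,∞) → ℂ be arbitrary functions (extended by 0 below 1). If α(x) = ∑_{n ≤ x} (f(n)/ξ(n))·β(x/n) for all real x ≥ 1, then β(x) = ∑_{n ≤ x} (g(n)/ξ(n))·α(x/n) for all real x ≥ 1. -/

import Mathlib

/-- `ξ(n) = ∏_p ν_p(n)!`. -/
def xi (n : ℕ) : ℕ := ∏ p ∈ n.primeFactors, Nat.factorial (n.factorization p)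

/-- The Dirichlet convolution. -/
noncomputable def dconv (f g : ℕ → ℂ) (n : ℕ) : ℂ :=
  ∑ d ∈ n.divisors, f d * g (n / d)

/-- `δ(1) = 1`, `δ(n) = 0` for `n > 1`. -/
def delta (n : ℕ) : ℂ := if n = 1 then 1 else 0

/-!
Write `a ∘ F` for Apostol's generalized convolution `x ↦ ∑_{n ≤ x} a(n) F(x/n)`. Regrouping the
double sum by `k = n m` gives `a ∘ (b ∘ F) = (a * b) ∘ F`, and `δ ∘ F = F` on `[1, ∞)`. Since `α`
is only ever evaluated at points `x/n ≥ 1`,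
`β = δ ∘ β = (h * f/ξ) ∘ β = h ∘ ((f/ξ) ∘ β) = h ∘ α = (g/ξ) ∘ α` on `[1, ∞)`.
-/

open Finset

noncomputable def generalizedConv (a : ℕ → ℂ) (F : ℝ → ℂ) (x : ℝ) : ℂ :=
  ∑ n ∈ Icc 1 ⌊x⌋₊, a n * F (x / n)

lemma xi_ne_zero (n : ℕ) : (xi n : ℂ) ≠ 0 := by
  unfold xi
  exact_mod_cast prod_ne_zero_iff.mpr fun p _ => Nat.factorial_ne_zero _

lemma dconv_comm (a b : ℕ → ℂ) : dconv a b = dconv b a := by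
  ext n
  rw [dconv, dconv, ← Nat.sum_div_divisors]
  refine sum_congr rfl fun d hd => ?_
  rw [Nat.div_div_self (Nat.dvd_of_mem_divisors hd) (Nat.mem_divisors.mp hd).2, mul_comm]

lemma sum_Icc_sum_Icc_div_eq_sum_divisorsAntidiagonal {M : Type*} [AddCommMonoid M] (N : ℕ)
    (t : ℕ → ℕ → M) :
    ∑ n ∈ Icc 1 N, ∑ m ∈ Icc 1 (N / n), t n m
      = ∑ k ∈ Icc 1 N, ∑ p ∈ k.divisorsAntidiagonal, t p.1 p.2 := by
  rw [sum_sigma', sum_sigma']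
  refine sum_nbij' (fun x => ⟨x.1 * x.2, (x.1, x.2)⟩) (fun x => ⟨x.2.1, x.2.2⟩)
    ?_ ?_ (fun _ _ => rfl) ?_ (fun _ _ => rfl)
  · rintro ⟨n, m⟩ hx
    simp only [mem_sigma, mem_Icc, Nat.mem_divisorsAntidiagonal] at hx ⊢
    obtain ⟨⟨hn, -⟩, hm, hmN⟩ := hx
    have hnmN := (Nat.le_div_iff_mul_le hn).mp hmN
    exact ⟨⟨by nlinarith, by nlinarith⟩, trivial, (Nat.mul_pos hn hm).ne'⟩
  · rintro ⟨k, d, e⟩ hx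
    simp only [mem_sigma, mem_Icc, Nat.mem_divisorsAntidiagonal] at hx ⊢
    obtain ⟨⟨hk, hkN⟩, rfl, -⟩ := hx
    have hd : 0 < d := Nat.pos_of_mul_pos_right hk
    have he : 0 < e := Nat.pos_of_mul_pos_left hk
    exact ⟨⟨hd, by nlinarith⟩, he, (Nat.le_div_iff_mul_le hd).mpr (by nlinarith)⟩
  · rintro ⟨k, d, e⟩ hx
    simp only [mem_sigma, Nat.mem_divisorsAntidiagonal] at hx
    rw [hx.2.1]

lemma generalizedConv_generalizedConv (a b : ℕ → ℂ) (F : ℝ → ℂ) (x : ℝ) :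
    generalizedConv a (generalizedConv b F) x = generalizedConv (dconv a b) F x := by
  calc generalizedConv a (generalizedConv b F) x
      = ∑ n ∈ Icc 1 ⌊x⌋₊, ∑ m ∈ Icc 1 (⌊x⌋₊ / n), a n * b m * F (x / ↑(n * m)) := by
        refine sum_congr rfl fun n _ => ?_
        rw [generalizedConv, Nat.floor_div_natCast, mul_sum]
        refine sum_congr rfl fun m _ => ?_
        rw [Nat.cast_mul, ← div_div, mul_assoc]
    _ = ∑ k ∈ Icc 1 ⌊x⌋₊, ∑ p ∈ k.divisorsAntidiagonal, a p.1 * b p.2 * F (x / ↑(p.1 * p.2)) :=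
        sum_Icc_sum_Icc_div_eq_sum_divisorsAntidiagonal _ _
    _ = generalizedConv (dconv a b) F x := by
        refine sum_congr rfl fun k _ => ?_
        rw [dconv, ← Nat.sum_divisorsAntidiagonal (fun d e => a d * b e), sum_mul]
        refine sum_congr rfl fun p hp => ?_
        rw [(Nat.mem_divisorsAntidiagonal.mp hp).1]

lemma generalizedConv_delta (F : ℝ → ℂ) {x : ℝ} (hx : 1 ≤ x) :
    generalizedConv delta F x = F x := by
  rw [generalizedConv, sum_eq_single_of_mem 1 (by simpa using hx)]
  · simp [delta]
  · intro n _ hn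
    simp [delta, hn]

lemma generalizedConv_congr {a a' : ℕ → ℂ} {F F' : ℝ → ℂ} (ha : ∀ n, 0 < n → a n = a' n)
    (hF : ∀ y, 1 ≤ y → F y = F' y) (x : ℝ) :
    generalizedConv a F x = generalizedConv a' F' x := by
  refine sum_congr rfl fun n hn => ?_
  obtain ⟨hn1, hnx⟩ := mem_Icc.mp hn
  have hn0 : (0 : ℝ) < n := by exact_mod_cast hn1
  rw [ha n hn1, hF _ ((one_le_div hn0).mpr ((Nat.le_floor_iff' (by omega)).mp hnx))]

theorem mobius_type_inversion_general (f h : ℕ → ℂ)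
    (hinv : ∀ n : ℕ, 0 < n → dconv (fun m => f m / (xi m : ℂ)) h n = delta n)
    (g : ℕ → ℂ) (hg : g = fun n => (xi n : ℂ) * h n)
    (α β : ℝ → ℂ)
    (hα : ∀ x : ℝ, 1 ≤ x →
      α x = ∑ n ∈ Finset.Icc 1 ⌊x⌋₊, (f n / (xi n : ℂ)) * β (x / n)) :
    ∀ x : ℝ, 1 ≤ x →
      β x = ∑ n ∈ Finset.Icc 1 ⌊x⌋₊, (g n / (xi n : ℂ)) * α (x / n) := by
  intro x hx
  have hgh (n : ℕ) : g n / (xi n : ℂ) = h n := by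
    rw [hg, mul_div_cancel_left₀ _ (xi_ne_zero n)]
  calc β x = generalizedConv delta β x := (generalizedConv_delta β hx).symm
    _ = generalizedConv (dconv h fun m => f m / (xi m : ℂ)) β x :=
      generalizedConv_congr (fun n hn => by rw [dconv_comm, hinv n hn]) (fun _ _ => rfl) x
    _ = generalizedConv h (generalizedConv (fun m => f m / (xi m : ℂ)) β) x :=
      (generalizedConv_generalizedConv _ _ _ _).symm
    _ = generalizedConv (fun n => g n / (xi n : ℂ)) α x :=
      generalizedConv_congr (fun n _ => (hgh n).symm) (fun y hy => (hα y hy).symm) x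

/-- Möbius-type inversion for the binomial convolution: let `f(1) ≠ 0`, let `h` be the
Dirichlet inverse of `n ↦ f(n)/ξ(n)`, and let `g = ξ·h` be the binomial inverse of `f`.
If `α(x) = ∑_{n ≤ x} (f(n)/ξ(n))·β(x/n)` for all real `x ≥ 1`, then
`β(x) = ∑_{n ≤ x} (g(n)/ξ(n))·α(x/n)` for all real `x ≥ 1`. -/
theorem mobius_type_inversion (f h : ℕ → ℂ) (hf : f 1 ≠ 0)
    (hinv : ∀ n : ℕ, 0 < n → dconv (fun m => f m / (xi m : ℂ)) h n = delta n)
    (g : ℕ → ℂ) (hg : g = fun n => (xi n : ℂ) * h n)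
    (α β : ℝ → ℂ)
    (hα : ∀ x : ℝ, 1 ≤ x →
      α x = ∑ n ∈ Finset.Icc 1 ⌊x⌋₊, (f n / (xi n : ℂ)) * β (x / n)) :
    ∀ x : ℝ, 1 ≤ x →
      β x = ∑ n ∈ Finset.Icc 1 ⌊x⌋₊, (g n / (xi n : ℂ)) * α (x / n) :=
  mobius_type_inversion_general f h hinv g hg α β hα
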